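/- For an MDS code [n, k, d] over GF(q) with d < q and any weight w with d ≤ w ≤ n, the number of codewords of weight w satisfies A_w ≥ C(n, w)(q-d)(q-1)^{w-d} > 0 (Tolhuizen's bound). -/

import Mathlib

/-!
Fix a support `T` with `#T = w` and put `k' = w - d + 1`. The codewords vanishing off `T` form a
subspace of dimension at least `k'`, and a nonzero one cannot also vanish on `k'` points of `T`
(its weight would drop below `d`); so restriction to any `k'`-subset `S ⊆ T` is a bijection.
Prescribe nonzero values on `k' - 1` points of `S`: the matching codewords form a line `c + F • u`
with `u` nonzero on the `d` remaining points of `T`, and each of these points kills only one point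
of the line. This gives `(q - d) (q - 1) ^ (k' - 1)` codewords with support exactly `T`, and there
are `C(n, w)` choices of `T`.
-/

/-- The minimum distance (= minimum nonzero weight) of a linear code. -/
noncomputable def minDist {F : Type*} [Field F] [Fintype F] [DecidableEq F] {n : ℕ}
    (C : Submodule F (Fin n → F)) : ℕ :=
  sInf {w | ∃ c ∈ C, c ≠ 0 ∧ hammingNorm c = w}

open Finset

section Weight

variable {ι F : Type*} [Fintype ι] [Field F] [DecidableEq F]

theorem hammingNorm_le_card_of_forall_notMem {U : Finset ι} {v : ι → F}
    (hU : ∀ i ∉ U, v i = 0) : hammingNorm v ≤ #U :=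
  card_le_card fun i hi => by
    by_contra hiU
    exact (mem_filter.mp hi).2 (hU i hiU)

variable {V : Submodule F (ι → F)} {d : ℕ}

theorem eq_zero_of_forall_notMem_of_card_lt (hV : ∀ v ∈ V, v ≠ 0 → d ≤ hammingNorm v)
    {U : Finset ι} {v : ι → F} (hv : v ∈ V) (hU : ∀ i ∉ U, v i = 0) (hUd : #U < d) :
    v = 0 := by
  by_contra hv0
  have := hV v hv hv0
  have := hammingNorm_le_card_of_forall_notMem hU
  omega

variable [DecidableEq ι] {T : Finset ι}

theorem eq_of_eqOn_of_card_lt (hV : ∀ v ∈ V, v ≠ 0 → d ≤ hammingNorm v)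
    (hVT : ∀ v ∈ V, ∀ i ∉ T, v i = 0) {S : Finset ι} (hST : S ⊆ T) (hTS : #T < d + #S)
    {v v' : ι → F} (hv : v ∈ V) (hv' : v' ∈ V) (hvv' : ∀ i ∈ S, v i = v' i) :
    v = v' := by
  refine sub_eq_zero.mp (eq_zero_of_forall_notMem_of_card_lt hV (sub_mem hv hv') (U := T \ S)
    (fun i hi => ?_) (by have := card_le_card hST; rw [card_sdiff_of_subset hST]; omega))
  by_cases hiT : i ∈ T
  · simp [hvv' i (by simpa [hiT] using hi)]
  · simp [hVT v hv i hiT, hVT v' hv' i hiT]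

theorem exists_mem_eqOn_of_card_le (hV : ∀ v ∈ V, v ≠ 0 → d ≤ hammingNorm v)
    (hVT : ∀ v ∈ V, ∀ i ∉ T, v i = 0) {S : Finset ι} (hST : S ⊆ T) (hTS : #T < d + #S)
    (hSV : #S ≤ Module.finrank F V) (x : ι → F) : ∃ v ∈ V, ∀ i ∈ S, v i = x i := by
  let restrict : V →ₗ[F] (S → F) := (LinearMap.funLeft F F Subtype.val).comp V.subtype
  have hinj : Function.Injective restrict := fun v v' h => Subtype.ext <|
    eq_of_eqOn_of_card_lt hV hVT hST hTS v.2 v'.2 fun i hi => congrFun h ⟨i, hi⟩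
  have hrank : Module.finrank F V = Module.finrank F (S → F) := by
    have := LinearMap.finrank_le_finrank_of_injective hinj
    simp only [Module.finrank_fintype_fun_eq_card, Fintype.card_coe] at this ⊢
    omega
  obtain ⟨v, hv⟩ :=
    (LinearMap.injective_iff_surjective_of_finrank_eq_finrank hrank).mp hinj (fun i => x i)
  exact ⟨v, v.2, fun i hi => congrFun hv ⟨i, hi⟩⟩

end Weight

section SupportedIn

variable (F : Type*) {ι : Type*} [Field F]

def supportedIn (T : Finset ι) : Submodule F (ι → F) :=
  LinearMap.ker (LinearMap.funLeft F F ((↑) : {i // i ∉ T} → ι))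

variable {F}

theorem mem_supportedIn {T : Finset ι} {v : ι → F} :
    v ∈ supportedIn F T ↔ ∀ i ∉ T, v i = 0 := by
  simp [supportedIn, funext_iff]

theorem finrank_add_card_le_finrank_inf_supportedIn [Fintype ι] (C : Submodule F (ι → F))
    (T : Finset ι) :
    Module.finrank F C + #T ≤ Fintype.card ι + Module.finrank F ↥(C ⊓ supportedIn F T) := by
  classical
  have hsup := Submodule.finrank_sup_add_finrank_inf_eq C (supportedIn F T)
  have hsupLe := Submodule.finrank_le (C ⊔ supportedIn F T)
  have hrange := Submodule.finrank_le
    (LinearMap.range (LinearMap.funLeft F F ((↑) : {i // i ∉ T} → ι)))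
  have hker := LinearMap.finrank_range_add_finrank_ker
    (LinearMap.funLeft F F ((↑) : {i // i ∉ T} → ι))
  have hcompl : Module.finrank F ({i // i ∉ T} → F) = Fintype.card ι - #T := by
    rw [Module.finrank_fintype_fun_eq_card, Fintype.card_subtype_compl, Fintype.card_coe]
  have hT := card_le_univ T
  rw [Module.finrank_fintype_fun_eq_card] at hsupLe hker
  rw [← supportedIn] at hker
  omega

end SupportedIn

section Counting

variable {ι F : Type*} [Fintype ι] [DecidableEq ι] [Field F] [Fintype F] [DecidableEq F]
  {V : Submodule F (ι → F)} {d : ℕ} {T : Finset ι}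

open Classical in
theorem card_sub_le_card_support_eq_of_eqOn (hV : ∀ v ∈ V, v ≠ 0 → d ≤ hammingNorm v)
    (hVT : ∀ v ∈ V, ∀ i ∉ T, v i = 0) {S : Finset ι} (hTS : #(T \ S) ≤ d)
    {c u : ι → F} (hc : c ∈ V) (hcS : ∀ i ∈ S, c i ≠ 0) (hu : u ∈ V) (hu0 : u ≠ 0)
    (huS : ∀ i ∈ S, u i = 0) :
    Fintype.card F - d ≤
      #{v | v ∈ V ∧ (∀ i, v i ≠ 0 ↔ i ∈ T) ∧ ∀ i ∈ S, v i = c i} := by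
  have hu_ne : ∀ j ∈ T \ S, u j ≠ 0 := by
    intro j hj huj
    refine hu0 (eq_zero_of_forall_notMem_of_card_lt hV hu (U := (T \ S).erase j) (fun i hi => ?_)
      (by rw [card_erase_of_mem hj]; have := card_pos.mpr ⟨j, hj⟩; omega))
    by_cases hij : i = j
    · rwa [hij]
    by_cases hiT : i ∈ T
    · exact huS i (by simpa [hij, hiT] using hi)
    · exact hVT u hu i hiT
  -- `c + t • u` vanishes at `j ∈ T \ S` only for the single value `t = -c j / u j`.
  let bad := (T \ S).image fun j => -c j / u j
  calc Fintype.card F - d ≤ #(univ \ bad) := by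
        have : #bad ≤ #(T \ S) := card_image_le
        rw [card_univ_sdiff]
        omega
    _ = #((univ \ bad).image fun t => c + t • u) :=
        (card_image_of_injective _ fun t t' h => smul_left_injective F hu0 (add_left_cancel h)).symm
    _ ≤ _ := by
        refine card_le_card fun v hv => ?_
        obtain ⟨t, ht, rfl⟩ := mem_image.mp hv
        refine mem_filter.mpr ⟨mem_univ _, add_mem hc (V.smul_mem t hu), fun i => ?_,
          fun i hi => by simp [huS i hi]⟩
        by_cases hiT : i ∈ T
        · by_cases hiS : i ∈ S
          · simpa [huS i hiS, hiT] using hcS i hiS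
          · have hui := hu_ne i (mem_sdiff.mpr ⟨hiT, hiS⟩)
            simp only [Pi.add_apply, Pi.smul_apply, smul_eq_mul, hiT, iff_true]
            intro h
            refine (mem_sdiff.mp ht).2 (mem_image.mpr ⟨i, mem_sdiff.mpr ⟨hiT, hiS⟩, ?_⟩)
            field_simp
            linear_combination -h
        · simp [hVT c hc i hiT, hVT u hu i hiT, hiT]

open Classical in
theorem mul_pow_le_card_support_eq (hV : ∀ v ∈ V, v ≠ 0 → d ≤ hammingNorm v)
    (hVT : ∀ v ∈ V, ∀ i ∉ T, v i = 0) (hd : 1 ≤ d) (hdT : d ≤ #T)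
    (hrank : #T + 1 ≤ Module.finrank F V + d) :
    (Fintype.card F - d) * (Fintype.card F - 1) ^ (#T - d) ≤
      #{v | v ∈ V ∧ ∀ i, v i ≠ 0 ↔ i ∈ T} := by
  obtain ⟨S, hST, hS⟩ := exists_subset_card_eq (show #T - d ≤ #T by omega)
  have hTS : #(T \ S) = d := by rw [card_sdiff_of_subset hST]; omega
  obtain ⟨s, hs⟩ : (T \ S).Nonempty := card_pos.mp (by omega)
  have hsS : s ∉ S := (mem_sdiff.mp hs).2
  have hsS_card : #(insert s S) = #T - d + 1 := by rw [card_insert_of_notMem hsS, hS]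
  have extend := exists_mem_eqOn_of_card_le hV hVT (insert_subset (mem_sdiff.mp hs).1 hST)
    (by omega) (by omega)
  obtain ⟨u, hu, hus⟩ := extend (Pi.single s 1)
  have hu0 : u ≠ 0 := fun h => by simpa [h] using hus s (mem_insert_self s S)
  have huS : ∀ i ∈ S, u i = 0 := fun i hi => by
    rw [hus i (mem_insert_of_mem hi), Pi.single_eq_of_ne (ne_of_mem_of_not_mem hi hsS)]
  have hY : #(Fintype.piFinset fun _ : S => ({0}ᶜ : Finset F)) =
      (Fintype.card F - 1) ^ (#T - d) := by
    simp [card_compl, hS]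
  rw [← hY]
  refine mul_card_image_le_card_of_maps_to (f := fun v (i : S) => v i) (fun v hv => ?_) _
    fun y hy => ?_
  · simp only [mem_filter, mem_univ, true_and] at hv
    simpa [Fintype.mem_piFinset] using fun i (hi : i ∈ S) => (hv.2 i).mpr (hST hi)
  · obtain ⟨c, hc, hcS⟩ := extend fun i => if h : i ∈ S then y ⟨i, h⟩ else 0
    have hcy : ∀ i (hi : i ∈ S), c i = y ⟨i, hi⟩ := fun i hi => by
      rw [hcS i (mem_insert_of_mem hi), dif_pos hi]
    calc Fintype.card F - d
        ≤ #{v | v ∈ V ∧ (∀ i, v i ≠ 0 ↔ i ∈ T) ∧ ∀ i ∈ S, v i = c i} :=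
          card_sub_le_card_support_eq_of_eqOn hV hVT hTS.le hc
            (fun i hi => by simpa [hcy i hi] using Fintype.mem_piFinset.mp hy ⟨i, hi⟩)
            hu hu0 huS
      _ ≤ _ := by
          refine card_le_card fun v hv => ?_
          simp only [mem_filter, mem_univ, true_and] at hv ⊢
          exact ⟨⟨hv.1, hv.2.1⟩, funext fun i => by rw [hv.2.2 i i.2, hcy i i.2]⟩

open Classical in
theorem mul_pow_le_card_support_eq_of_le_finrank {C : Submodule F (ι → F)}
    (hC : ∀ c ∈ C, c ≠ 0 → d ≤ hammingNorm c) (hd : 1 ≤ d)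
    (hCd : Fintype.card ι + 1 ≤ Module.finrank F C + d) (hdT : d ≤ #T) :
    (Fintype.card F - d) * (Fintype.card F - 1) ^ (#T - d) ≤
      #{c | c ∈ C ∧ ∀ i, c i ≠ 0 ↔ i ∈ T} := by
  have hrank := finrank_add_card_le_finrank_inf_supportedIn C T
  refine (mul_pow_le_card_support_eq (V := C ⊓ supportedIn F T)
    (fun v hv => hC v (Submodule.mem_inf.mp hv).1)
    (fun v hv => mem_supportedIn.mp (Submodule.mem_inf.mp hv).2) hd hdT (by omega)).trans
    (card_le_card (monotone_filter_right _ fun v _ hv => ⟨(Submodule.mem_inf.mp hv.1).1, hv.2⟩))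

end Counting

/-- Tolhuizen's bound: for an MDS code `[n, k, d]` over `GF(q)` with `d < q` and any
weight `w` with `d ≤ w ≤ n`, the number of codewords of weight `w` satisfies
`A_w ≥ C(n,w)(q-d)(q-1)^(w-d) > 0`. -/
theorem stmt_18 (q n k d : ℕ) (F : Type*) [Field F] [Fintype F] [DecidableEq F]
    (hcard : Fintype.card F = q)
    (C : Submodule F (Fin n → F)) (hk : Module.finrank F C = k)
    (hd : d = n - k + 1) (hmin : minDist C = d) (hdq : d < q)
    (w : ℕ) (hw1 : d ≤ w) (hw2 : w ≤ n) :
    n.choose w * (q - d) * (q - 1) ^ (w - d)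
        ≤ {c : Fin n → F | c ∈ C ∧ hammingNorm c = w}.ncard ∧
    0 < n.choose w * (q - d) * (q - 1) ^ (w - d) := by
  classical
  have hC : ∀ c ∈ C, c ≠ 0 → d ≤ hammingNorm c := fun c hc hc0 =>
    hmin ▸ Nat.sInf_le ⟨c, hc, hc0, rfl⟩
  have hkn : k ≤ n := hk ▸ (Submodule.finrank_le C).trans_eq (by simp)
  refine ⟨?_, Nat.mul_pos (Nat.mul_pos (Nat.choose_pos hw2) (by omega)) (pow_pos (by omega) _)⟩
  have hset : {c : Fin n → F | c ∈ C ∧ hammingNorm c = w} =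
      ↑({c | c ∈ C ∧ hammingNorm c = w} : Finset (Fin n → F)) := by
    ext; simp
  rw [hset, Set.ncard_coe_finset]
  calc n.choose w * (q - d) * (q - 1) ^ (w - d)
      = ((q - d) * (q - 1) ^ (w - d)) * #(powersetCard w (univ : Finset (Fin n))) := by
        rw [card_powersetCard, card_univ, Fintype.card_fin]; ring
    _ ≤ _ := by
        refine mul_card_image_le_card_of_maps_to
          (f := fun c : Fin n → F => ({i | c i ≠ 0} : Finset (Fin n)))
          (fun c hc => mem_powersetCard.mpr ⟨subset_univ _, (mem_filter.mp hc).2.2⟩) _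
          fun T hT => ?_
        have hTw := (mem_powersetCard.mp hT).2
        refine (hcard ▸ hTw ▸ mul_pow_le_card_support_eq_of_le_finrank hC (by omega)
          (by rw [Fintype.card_fin]; omega) (hTw ▸ hw1)).trans (card_le_card fun c hc => ?_)
        simp only [mem_filter, mem_univ, true_and] at hc ⊢
        have hsupp : ({i | c i ≠ 0} : Finset (Fin n)) = T := by ext i; simp [hc.2 i]
        exact ⟨⟨hc.1, by rw [hammingNorm, hsupp, hTw]⟩, hsupp⟩
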